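/- Let w : ℝ² → ℝ be a bounded differentiable function whose gradient is bounded, with ‖w‖∞ = sup_{z∈ℝ²} |w(z)| and ‖∇w‖∞ = sup_{z∈ℝ²} ‖∇w(z)‖₂. Let I be a finite index set and, for each i ∈ I, let u_i = (a_i, b_i) and v_i = (c_i, d_i) be points of ℝ² with a_i ≤ b_i and c_i ≤ d_i (representing a matching between two persistence diagrams, where points matched to the diagonal have equal coordinates). Define the Betti functions β₁(t) = Σ_{i∈I} w(u_i)·χ_{[a_i,b_i)}(t) and β₂(t) = Σ_{i∈I} w(v_i)·χ_{[c_i,d_i)}(t), and let L = max_{i∈I} max{b_i − a_i, d_i − c_i}. Then ‖β₁ − β₂‖_{L¹} ≤ (‖w‖∞ + L·‖∇w‖∞) · Σ_{i∈I} ‖u_i − v_i‖₁, where ‖β₁ − β₂‖_{L¹} = ∫_ℝ |β₁(t) − β₂(t)| dt. -/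

import Mathlib

/-!
Matching the bars pairwise, `|β₁ - β₂| ≤ ∑ᵢ |w uᵢ · χ[aᵢ, bᵢ) - w vᵢ · χ[cᵢ, dᵢ)|`, and each
summand splits as `w uᵢ · (χ[aᵢ, bᵢ) - χ[cᵢ, dᵢ)) + (w uᵢ - w vᵢ) · χ[cᵢ, dᵢ)`. The first part is
bounded by `W` and supported on the symmetric difference of the two intervals, which lies in
`[aᵢ ⊓ cᵢ, aᵢ ⊔ cᵢ) ∪ [bᵢ ⊓ dᵢ, bᵢ ⊔ dᵢ)` and so has measure at most `‖uᵢ - vᵢ‖₁`. By the mean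
value theorem the second part is at most `Wg · ‖uᵢ - vᵢ‖₂ ≤ Wg · ‖uᵢ - vᵢ‖₁` on an interval of
length `dᵢ - cᵢ ≤ L`.
-/

open MeasureTheory

noncomputable def chiIco (a b t : ℝ) : ℝ :=
  Set.indicator (Set.Ico a b) (fun _ => (1 : ℝ)) t

noncomputable def pt (a b : ℝ) : EuclideanSpace ℝ (Fin 2) :=
  (WithLp.equiv 2 (Fin 2 → ℝ)).symm ![a, b]

lemma chiIco_nonneg (a b t : ℝ) : 0 ≤ chiIco a b t :=
  Set.indicator_nonneg (fun _ _ => zero_le_one) t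

lemma integrable_chiIco (a b : ℝ) : Integrable (chiIco a b) :=
  (integrable_indicator_iff measurableSet_Ico).2 (integrableOn_const measure_Ico_lt_top.ne)

lemma integral_chiIco {a b : ℝ} (h : a ≤ b) : ∫ t, chiIco a b t = b - a := by
  simp [chiIco, integral_indicator measurableSet_Ico, h]

lemma abs_chiIco_sub_chiIco_le (a b c d t : ℝ) :
    |chiIco a b t - chiIco c d t|
      ≤ chiIco (min a c) (max a c) t + chiIco (min b d) (max b d) t := by
  simp only [chiIco, Set.indicator_apply, Set.mem_Ico, min_le_iff, lt_max_iff]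
  split_ifs <;> norm_num <;> grind

lemma abs_mul_chiIco_sub_mul_chiIco_le (x y a b c d t : ℝ) :
    |x * chiIco a b t - y * chiIco c d t|
      ≤ |x| * chiIco (min a c) (max a c) t + |x| * chiIco (min b d) (max b d) t
        + |x - y| * chiIco c d t := by
  calc |x * chiIco a b t - y * chiIco c d t|
      = |x * (chiIco a b t - chiIco c d t) + (x - y) * chiIco c d t| := by congr 1; ring
    _ ≤ |x * (chiIco a b t - chiIco c d t)| + |(x - y) * chiIco c d t| := abs_add_le _ _
    _ = |x| * |chiIco a b t - chiIco c d t| + |x - y| * chiIco c d t := by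
        rw [abs_mul, abs_mul, abs_of_nonneg (chiIco_nonneg c d t)]
    _ ≤ _ := by
        rw [← mul_add]
        gcongr
        exact abs_chiIco_sub_chiIco_le a b c d t

lemma integral_abs_mul_chiIco_sub_mul_chiIco_le (x y a b : ℝ) {c d : ℝ} (hcd : c ≤ d) :
    ∫ t, |x * chiIco a b t - y * chiIco c d t|
      ≤ |x| * (|a - c| + |b - d|) + |x - y| * (d - c) := by
  have hint (a b z : ℝ) : Integrable (fun t => z * chiIco a b t) :=
    (integrable_chiIco a b).const_mul z
  calc ∫ t, |x * chiIco a b t - y * chiIco c d t|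
      ≤ ∫ t, (|x| * chiIco (min a c) (max a c) t + |x| * chiIco (min b d) (max b d) t
          + |x - y| * chiIco c d t) :=
        integral_mono (((hint a b x).sub (hint c d y)).abs)
          (((hint _ _ _).add (hint _ _ _)).add (hint _ _ _))
          (abs_mul_chiIco_sub_mul_chiIco_le x y a b c d)
    _ = _ := by
        rw [integral_add, integral_add, integral_const_mul, integral_const_mul,
          integral_const_mul, integral_chiIco min_le_max, integral_chiIco min_le_max,
          integral_chiIco hcd, max_sub_min_eq_abs, max_sub_min_eq_abs, abs_sub_comm c,
          abs_sub_comm d]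
        · ring
        all_goals first | exact hint _ _ _ | exact (hint _ _ _).add (hint _ _ _)

lemma integral_abs_sum_sub_sum_le {α ι : Type*} [MeasurableSpace α] {μ : Measure α}
    [Fintype ι] {f g : ι → α → ℝ} (hf : ∀ i, Integrable (f i) μ)
    (hg : ∀ i, Integrable (g i) μ) :
    ∫ t, |∑ i, f i t - ∑ i, g i t| ∂μ ≤ ∑ i, ∫ t, |f i t - g i t| ∂μ := by
  have hfg (i : ι) : Integrable (fun t => |f i t - g i t|) μ := ((hf i).sub (hg i)).abs
  calc ∫ t, |∑ i, f i t - ∑ i, g i t| ∂μ ≤ ∫ t, ∑ i, |f i t - g i t| ∂μ := by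
        refine integral_mono ((integrable_finsetSum _ fun i _ => hf i).sub
          (integrable_finsetSum _ fun i _ => hg i)).abs
          (integrable_finsetSum _ fun i _ => hfg i) fun t => ?_
        simpa only [Finset.sum_apply, ← Finset.sum_sub_distrib] using
          Finset.abs_sum_le_sum_abs (fun i => f i t - g i t) Finset.univ
    _ = ∑ i, ∫ t, |f i t - g i t| ∂μ := integral_finsetSum _ fun i _ => hfg i

lemma EuclideanSpace.norm_le_sum_abs {ι : Type*} [Fintype ι] (x : EuclideanSpace ℝ ι) :
    ‖x‖ ≤ ∑ i, |x i| := by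
  calc ‖x‖ = ‖∑ i, x i • EuclideanSpace.basisFun ι ℝ i‖ := by
        conv_lhs => rw [← (EuclideanSpace.basisFun ι ℝ).sum_repr x]
        simp only [EuclideanSpace.basisFun_repr]
    _ ≤ ∑ i, |x i| := (norm_sum_le _ _).trans_eq (by simp [norm_smul])

lemma norm_pt_sub_pt_le (a b c d : ℝ) : ‖pt a b - pt c d‖ ≤ |a - c| + |b - d| :=
  (EuclideanSpace.norm_le_sum_abs _).trans_eq (by simp [pt, Fin.sum_univ_two])

lemma abs_sub_le_of_norm_gradient_le {E : Type*} [NormedAddCommGroup E] [InnerProductSpace ℝ E]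
    [CompleteSpace E] {f : E → ℝ} {C : ℝ} (hf : Differentiable ℝ f)
    (hC : ∀ z, ‖gradient f z‖ ≤ C) (x y : E) : |f x - f y| ≤ C * ‖x - y‖ := by
  have hfd : ∀ z ∈ Set.univ, ‖fderiv ℝ f z‖ ≤ C := fun z _ => by
    simpa [gradient] using hC z
  simpa [Real.norm_eq_abs] using
    convex_univ.norm_image_sub_le_of_norm_fderiv_le (fun z _ => hf z) hfd
      (Set.mem_univ y) (Set.mem_univ x)

theorem betti_function_stability_general
    (w : EuclideanSpace ℝ (Fin 2) → ℝ) (W Wg : ℝ)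
    (hdiff : Differentiable ℝ w)
    (hW : ∀ z, |w z| ≤ W)
    (hWg : ∀ z, ‖gradient w z‖ ≤ Wg)
    (ι : Type*) [Fintype ι]
    (a b c d : ι → ℝ)
    (hcd : ∀ i, c i ≤ d i)
    (L : ℝ) (hL : ∀ i, max (b i - a i) (d i - c i) ≤ L) :
    ∫ t : ℝ, |(∑ i, w (pt (a i) (b i)) * chiIco (a i) (b i) t)
        - ∑ i, w (pt (c i) (d i)) * chiIco (c i) (d i) t|
      ≤ (W + L * Wg) * ∑ i, (|a i - c i| + |b i - d i|) := by
  have hint (x a b : ℝ) : Integrable (fun t => x * chiIco a b t) :=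
    (integrable_chiIco a b).const_mul x
  have hWg0 : 0 ≤ Wg := (norm_nonneg _).trans (hWg 0)
  calc _ ≤ ∑ i, ∫ t, |w (pt (a i) (b i)) * chiIco (a i) (b i) t
          - w (pt (c i) (d i)) * chiIco (c i) (d i) t| :=
        integral_abs_sum_sub_sum_le (fun i => hint _ _ _) (fun i => hint _ _ _)
    _ ≤ ∑ i, (|w (pt (a i) (b i))| * (|a i - c i| + |b i - d i|)
          + |w (pt (a i) (b i)) - w (pt (c i) (d i))| * (d i - c i)) :=
        Finset.sum_le_sum fun i _ => integral_abs_mul_chiIco_sub_mul_chiIco_le _ _ _ _ (hcd i)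
    _ ≤ ∑ i, (W + L * Wg) * (|a i - c i| + |b i - d i|) := Finset.sum_le_sum fun i _ => by
        have hlip : |w (pt (a i) (b i)) - w (pt (c i) (d i))|
            ≤ Wg * (|a i - c i| + |b i - d i|) :=
          (abs_sub_le_of_norm_gradient_le hdiff hWg _ _).trans
            (by gcongr; exact norm_pt_sub_pt_le ..)
        have hlen : d i - c i ≤ L := (le_max_right _ _).trans (hL i)
        calc _ ≤ W * (|a i - c i| + |b i - d i|) + Wg * (|a i - c i| + |b i - d i|) * L := by
              gcongr
              · exact hW _
              · exact sub_nonneg.2 (hcd i)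
          _ = _ := by ring
    _ = _ := (Finset.mul_sum _ _ _).symm

/-- **Stability of Betti functions (Theorem 1).** Let `w : ℝ² → ℝ` be a bounded
differentiable function with bounded gradient (`W` bounds `|w|` and `Wg` bounds the
Euclidean norm of `∇w`). Given a matching `i ↦ (uᵢ, vᵢ)` between two persistence
diagrams, with `uᵢ = (aᵢ, bᵢ)`, `vᵢ = (cᵢ, dᵢ)`, `aᵢ ≤ bᵢ`, `cᵢ ≤ dᵢ`, and
`L ≥ max (bᵢ - aᵢ) (dᵢ - cᵢ)` for all `i`, the Betti functions
`β₁(t) = Σᵢ w(uᵢ)·χ_{[aᵢ,bᵢ)}(t)` and `β₂(t) = Σᵢ w(vᵢ)·χ_{[cᵢ,dᵢ)}(t)` satisfy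
`‖β₁ − β₂‖_{L¹} ≤ (W + L·Wg) · Σᵢ ‖uᵢ − vᵢ‖₁`. -/
theorem betti_function_stability
    (w : EuclideanSpace ℝ (Fin 2) → ℝ) (W Wg : ℝ)
    (hdiff : Differentiable ℝ w)
    (hW : ∀ z, |w z| ≤ W)
    (hWg : ∀ z, ‖gradient w z‖ ≤ Wg)
    (ι : Type*) [Fintype ι]
    (a b c d : ι → ℝ)
    (hab : ∀ i, a i ≤ b i) (hcd : ∀ i, c i ≤ d i)
    (L : ℝ) (hL : ∀ i, max (b i - a i) (d i - c i) ≤ L) :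
    ∫ t : ℝ, |(∑ i, w (pt (a i) (b i)) * chiIco (a i) (b i) t)
        - ∑ i, w (pt (c i) (d i)) * chiIco (c i) (d i) t|
      ≤ (W + L * Wg) * ∑ i, (|a i - c i| + |b i - d i|) :=
  betti_function_stability_general w W Wg hdiff hW hWg ι a b c d hcd L hL
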